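/- Let β be a Pisot number and let δ be the smallest positive integer such that ⌊β⌋/β^{δ−1} + ⌊β⌋/β^{δ} ≤ 1 − {β}. For an input sequence (x_j)_{j≥1} over A_β = {0, …, ⌈β⌉−1} with 0 ≤ Σ_{j≥1} x_j β^{−j} < 1/(β+1), define q_0 = 0, q_j = q_{j−1} + x_j β^{−j} for 1 ≤ j ≤ δ, and for j ≥ 1: z_{δ+j} = −β q_{δ+j−1} + (−1)^j x_{δ+j} β^{−δ}; y_j = ⌊z_{δ+j} + β/(β+1)⌋ if −β/(β+1) ≤ z_{δ+j} ≤ β²/(β+1), y_j = ⌊β⌋ if z_{δ+j} > β²/(β+1), y_j = 0 if z_{δ+j} < −β/(β+1); and q_{δ+j} = z_{δ+j} − y_j. Then the set of all values q_n, taken over all n ≥ 0 and over all such input sequences, is finite. -/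

import Mathlib

/-- A Pisot number: an algebraic integer `β > 1` all of whose other complex conjugates
have modulus strictly less than `1`. -/
def IsPisot (β : ℝ) : Prop :=
  1 < β ∧ IsIntegral ℤ β ∧
    ∀ z : ℂ, Polynomial.aeval z (minpoly ℤ β) = 0 → z ≠ (β : ℂ) → ‖z‖ < 1

/-- The condition `⌊β⌋/β^(δ-1) + ⌊β⌋/β^δ ≤ 1 - {β}` defining the delay of the on-line
conversion algorithm. -/
noncomputable def DelayCond (β : ℝ) (δ : ℕ) : Prop :=
  (⌊β⌋ : ℝ) / β ^ (δ - 1) + (⌊β⌋ : ℝ) / β ^ δ ≤ 1 - Int.fract β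

/-- The states (remainders) `q_n` of the on-line conversion algorithm with delay `δ` on
the input `(x_j)_{j≥1}` (where `x j` is the digit `x_{j+1}`): `q_0 = 0`;
`q_j = q_{j-1} + x_j β^{-j}` for `1 ≤ j ≤ δ`; and for `n = δ + j` with `j ≥ 1`,
`z_{δ+j} = -β q_{δ+j-1} + (-1)^j x_{δ+j} β^{-δ}`, the output digit `y_j` is
`⌊z_{δ+j} + β/(β+1)⌋` if `-β/(β+1) ≤ z_{δ+j} ≤ β²/(β+1)`, `⌊β⌋` if
`z_{δ+j} > β²/(β+1)`, `0` if `z_{δ+j} < -β/(β+1)`, and `q_{δ+j} = z_{δ+j} - y_j`. -/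
noncomputable def qseq (β : ℝ) (δ : ℕ) (x : ℕ → ℤ) : ℕ → ℝ
  | 0 => 0
  | n + 1 =>
    if n + 1 ≤ δ then qseq β δ x n + (x n : ℝ) * (β ^ (n + 1))⁻¹
    else
      let j := n + 1 - δ
      let z := -β * qseq β δ x n + (-1 : ℝ) ^ j * (x n : ℝ) * (β ^ δ)⁻¹
      let y : ℤ :=
        if z < -β / (β + 1) then 0
        else if z ≤ β ^ 2 / (β + 1) then ⌊z + β / (β + 1)⌋
        else ⌊β⌋
      z - (y : ℝ)

/-!
The states are bounded: under the delay condition each conversion step maps the interval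
`[-β/(β+1) - ⌊β⌋/β^δ, 1/(β+1)]` into itself, and the first `δ` states are partial sums of the
input value, which lies in `[0, 1/(β+1))`. Moreover `β^δ q_n = P_n(β)` for an integer polynomial
`P_n` obeying the same recursion, so at a conjugate `γ` with `|γ| < 1` the multiplication by `-γ`
contracts and `|P_n(γ)|` stays bounded as well. Algebraic integers of `ℚ(β)` all of whose
conjugates are bounded form a finite set.
-/

open Polynomial Finset

/-- The output digit `y` chosen from `z`. -/
noncomputable def negBetaDigit (β z : ℝ) : ℤ :=
  if z < -β / (β + 1) then 0
  else if z ≤ β ^ 2 / (β + 1) then ⌊z + β / (β + 1)⌋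
  else ⌊β⌋

/-- The quantity `z_{n+1}` of the algorithm. -/
noncomputable def preState (β : ℝ) (δ : ℕ) (x : ℕ → ℤ) (n : ℕ) : ℝ :=
  -β * qseq β δ x n + (-1 : ℝ) ^ (n + 1 - δ) * (x n : ℝ) * (β ^ δ)⁻¹

section States

variable {β : ℝ} {δ : ℕ} {x : ℕ → ℤ}

theorem qseq_succ_of_lt {n : ℕ} (h : n < δ) :
    qseq β δ x (n + 1) = qseq β δ x n + (x n : ℝ) * (β ^ (n + 1))⁻¹ := by
  rw [qseq, if_pos (show n + 1 ≤ δ from h)]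

theorem qseq_succ_of_le {n : ℕ} (h : δ ≤ n) :
    qseq β δ x (n + 1) = preState β δ x n - negBetaDigit β (preState β δ x n) := by
  rw [qseq, if_neg (by omega)]
  rfl

theorem qseq_eq_sum_range {n : ℕ} (h : n ≤ δ) :
    qseq β δ x n = ∑ j ∈ range n, (x j : ℝ) * β⁻¹ ^ (j + 1) := by
  induction n with
  | zero => rfl
  | succ n ih => rw [qseq_succ_of_lt h, ih (by omega), sum_range_succ, inv_pow]

end States

theorem negBetaDigit_mem_Icc {β : ℝ} (hβ : 0 ≤ β) (z : ℝ) :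
    negBetaDigit β z ∈ Set.Icc 0 ⌊β⌋ := by
  have hfloor : 0 ≤ ⌊β⌋ := Int.floor_nonneg.2 hβ
  unfold negBetaDigit
  split_ifs with hlow hmid
  · exact ⟨le_rfl, hfloor⟩
  · have hP : β ^ 2 / (β + 1) + β / (β + 1) = β := by field_simp
    exact ⟨Int.floor_nonneg.2 (by rw [neg_div] at hlow; linarith),
      Int.floor_mono (by linarith)⟩
  · exact ⟨hfloor, le_rfl⟩

theorem sub_negBetaDigit_mem_Icc {β q c τ : ℝ} (hβ : 0 < β) (hc : |c| ≤ τ)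
    (hτ : (β + 1) * τ ≤ 1 - Int.fract β)
    (hq : q ∈ Set.Icc (-(β / (β + 1)) - τ) (1 / (β + 1))) :
    -β * q + c - negBetaDigit β (-β * q + c) ∈ Set.Icc (-(β / (β + 1)) - τ) (1 / (β + 1)) := by
  obtain ⟨hcl, hcu⟩ := abs_le.1 hc
  have hsum : β / (β + 1) + 1 / (β + 1) = 1 := by field_simp
  have hsq : β ^ 2 / (β + 1) = β - β / (β + 1) := by field_simp; ring
  have hP : 0 ≤ β / (β + 1) := by positivity
  have hfract : (⌊β⌋ : ℝ) + Int.fract β = β := Int.floor_add_fract β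
  have hβq_lo : -(β / (β + 1)) ≤ -β * q := by
    have := mul_le_mul_of_nonneg_left hq.2 hβ.le
    rw [mul_one_div] at this
    linarith
  have hβq_hi : -β * q ≤ β - β / (β + 1) + β * τ := by
    have := mul_le_mul_of_nonneg_left hq.1 hβ.le
    rw [← hsq]
    field_simp at this ⊢
    linarith
  unfold negBetaDigit
  split_ifs with hlow hmid
  · rw [neg_div] at hlow
    constructor <;> push_cast <;> linarith
  · have h1 := Int.floor_le (-β * q + c + β / (β + 1))
    have h2 := Int.lt_floor_add_one (-β * q + c + β / (β + 1))
    constructor <;> linarith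
  · constructor <;> nlinarith [Int.fract_nonneg β, Int.floor_le β]

theorem DelayCond.add_one_mul_floor_div_le {β : ℝ} {δ : ℕ} (hβ : 0 < β) (hδ : 0 < δ)
    (h : DelayCond β δ) : (β + 1) * (⌊β⌋ / β ^ δ) ≤ 1 - Int.fract β := by
  have hpow : β ^ δ = β ^ (δ - 1) * β := by rw [← pow_succ, Nat.sub_add_cancel hδ]
  unfold DelayCond at h
  calc (β + 1) * (⌊β⌋ / β ^ δ) = ⌊β⌋ / β ^ (δ - 1) + ⌊β⌋ / β ^ δ := by
        rw [hpow]; field_simp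
    _ ≤ 1 - Int.fract β := h

theorem summable_digits_mul_inv_pow {β : ℝ} {x : ℕ → ℤ} {m : ℤ} (hβ : 1 < β)
    (hx : ∀ j, 0 ≤ x j ∧ x j ≤ m) : Summable fun j ↦ (x j : ℝ) * β⁻¹ ^ (j + 1) := by
  have h0 : 0 ≤ β⁻¹ := inv_nonneg.2 (by linarith)
  refine Summable.of_nonneg_of_le (fun j ↦ mul_nonneg (by exact_mod_cast (hx j).1) (by positivity))
    (fun j ↦ mul_le_mul_of_nonneg_right (show (x j : ℝ) ≤ m by exact_mod_cast (hx j).2)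
      (by positivity))
    (((summable_geometric_of_lt_one h0 (inv_lt_one_of_one_lt₀ hβ)).mul_left (m * β⁻¹)).congr
      fun j ↦ by ring)

theorem qseq_mem_Icc {β : ℝ} {δ : ℕ} {x : ℕ → ℤ} (hβ : 1 < β) (hδpos : 0 < δ)
    (hδ : DelayCond β δ) (hx : ∀ j, 0 ≤ x j ∧ x j ≤ ⌊β⌋)
    (hval : ∑' j : ℕ, (x j : ℝ) * β⁻¹ ^ (j + 1) < 1 / (β + 1)) (n : ℕ) :
    qseq β δ x n ∈ Set.Icc (-(β / (β + 1)) - ⌊β⌋ / β ^ δ) (1 / (β + 1)) := by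
  have hβ0 : 0 < β := by linarith
  have hP : 0 ≤ β / (β + 1) := by positivity
  have hτ : 0 ≤ (⌊β⌋ : ℝ) / β ^ δ := by
    have := Int.floor_nonneg.2 hβ0.le
    positivity
  induction n with
  | zero => exact ⟨by rw [qseq]; linarith, by rw [qseq]; positivity⟩
  | succ n ih =>
    rcases lt_or_ge n δ with hn | hn
    · have hterm : ∀ j, 0 ≤ (x j : ℝ) * β⁻¹ ^ (j + 1) := fun j ↦
        mul_nonneg (by exact_mod_cast (hx j).1) (by positivity)
      rw [qseq_eq_sum_range hn]
      refine ⟨le_trans (by linarith) (sum_nonneg fun j _ ↦ hterm j),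
        le_of_lt (lt_of_le_of_lt ?_ hval)⟩
      exact (summable_digits_mul_inv_pow hβ hx).sum_le_tsum _ fun j _ ↦ hterm j
    · rw [qseq_succ_of_le hn]
      refine sub_negBetaDigit_mem_Icc hβ0 ?_ (hδ.add_one_mul_floor_div_le hβ0 hδpos) ih
      rw [abs_mul, abs_mul, abs_pow, abs_neg, abs_one, one_pow, one_mul, abs_inv,
        abs_of_pos (pow_pos hβ0 δ), abs_of_nonneg (Int.cast_nonneg (hx n).1),
        ← div_eq_mul_inv]
      gcongr
      exact_mod_cast (hx n).2

noncomputable def statePoly (β : ℝ) (δ : ℕ) (x : ℕ → ℤ) : ℕ → ℤ[X]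
  | 0 => 0
  | n + 1 =>
    if n < δ then statePoly β δ x n + C (x n) * X ^ (δ - (n + 1))
    else -X * statePoly β δ x n + (-1) ^ (n + 1 - δ) * C (x n) -
      C (negBetaDigit β (preState β δ x n)) * X ^ δ

theorem aeval_statePoly {β : ℝ} (hβ : β ≠ 0) (δ : ℕ) (x : ℕ → ℤ) (n : ℕ) :
    aeval β (statePoly β δ x n) = β ^ δ * qseq β δ x n := by
  induction n with
  | zero => simp [statePoly, qseq]
  | succ n ih =>
    rw [statePoly]
    split_ifs with hn
    · rw [qseq_succ_of_lt hn, map_add, ih, map_mul, map_pow, aeval_X, aeval_C,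
        pow_sub₀ _ hβ (show n + 1 ≤ δ from hn)]
      simp only [algebraMap_int_eq, eq_intCast]
      ring
    · rw [qseq_succ_of_le (not_lt.1 hn), preState, map_sub, map_add, map_mul, ih]
      simp only [map_mul, map_pow, map_neg, map_one, aeval_X, eq_intCast,
        map_intCast]
      field_simp

theorem le_of_grow_then_contract {a : ℕ → ℝ} {δ : ℕ} {t A D : ℝ} (ht0 : 0 ≤ t) (ht1 : t < 1)
    (hA : 0 ≤ A) (hD : 0 ≤ D) (h0 : a 0 ≤ 0) (hgrow : ∀ n < δ, a (n + 1) ≤ a n + A)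
    (hcontract : ∀ n, δ ≤ n → a (n + 1) ≤ t * a n + D) (n : ℕ) :
    a n ≤ δ * A + D / (1 - t) := by
  have hE : D / (1 - t) * (1 - t) = D := div_mul_cancel₀ _ (by linarith)
  have hE0 : 0 ≤ D / (1 - t) := div_nonneg hD (by linarith)
  suffices h : ∀ n, a n ≤ (min n δ : ℕ) * A + D / (1 - t) by
    refine (h n).trans ?_
    gcongr
    exact min_le_right n δ
  intro n
  induction n with
  | zero => simpa using h0.trans hE0
  | succ n ih =>
    rcases lt_or_ge n δ with hn | hn
    · rw [min_eq_left hn, min_eq_left hn.le] at *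
      push_cast
      linarith [hgrow n hn]
    · rw [min_eq_right hn, min_eq_right (hn.trans n.le_succ)] at *
      have htδ : t * (δ * A) ≤ δ * A := mul_le_of_le_one_left (by positivity) ht1.le
      calc a (n + 1) ≤ t * a n + D := hcontract n hn
        _ ≤ t * (δ * A + D / (1 - t)) + D := by gcongr
        _ = t * (δ * A) + D / (1 - t) := by nth_rw 2 [← hE]; ring
        _ ≤ δ * A + D / (1 - t) := by linarith

theorem norm_aeval_statePoly_le {β : ℝ} {δ : ℕ} {x : ℕ → ℤ} (hβ : 0 ≤ β)
    (hx : ∀ j, |x j| ≤ ⌊β⌋) {γ : ℂ} (hγ : ‖γ‖ < 1) (n : ℕ) :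
    ‖aeval γ (statePoly β δ x n)‖ ≤ δ * ⌊β⌋ + 2 * ⌊β⌋ / (1 - ‖γ‖) := by
  have hfloor : (0 : ℝ) ≤ ⌊β⌋ := by exact_mod_cast Int.floor_nonneg.2 hβ
  have hdigit : ∀ (m : ℤ) (k : ℕ), |m| ≤ ⌊β⌋ → ‖(m : ℂ) * γ ^ k‖ ≤ ⌊β⌋ := fun m k hm ↦ by
    rw [norm_mul, norm_pow, Complex.norm_intCast, ← mul_one (⌊β⌋ : ℝ)]
    exact mul_le_mul (by exact_mod_cast hm) (pow_le_one₀ (norm_nonneg γ) hγ.le) (by positivity)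
      hfloor
  refine le_of_grow_then_contract (a := fun n ↦ ‖aeval γ (statePoly β δ x n)‖)
    (norm_nonneg γ) hγ hfloor (by linarith) (by simp [statePoly]) (fun n hn ↦ ?_) (fun n hn ↦ ?_) n
  · simp only [statePoly, if_pos hn, map_add, map_mul, map_pow, aeval_X, eq_intCast, map_intCast]
    exact (norm_add_le _ _).trans (by linarith [hdigit (x n) (δ - (n + 1)) (hx n)])
  · obtain ⟨hy0, hy⟩ := negBetaDigit_mem_Icc hβ (preState β δ x n)
    simp only [statePoly, if_neg (not_lt.2 hn), map_sub, map_add, map_mul, map_neg, map_pow,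
      map_one, aeval_X, eq_intCast, map_intCast]
    have hsign : ‖(-1 : ℂ) ^ (n + 1 - δ) * (x n : ℂ)‖ ≤ ⌊β⌋ := by
      simpa using hdigit (x n) 0 (hx n)
    have hout := hdigit _ δ (by rwa [abs_of_nonneg hy0])
    calc _ ≤ ‖-γ * aeval γ (statePoly β δ x n)‖ + ‖(-1 : ℂ) ^ (n + 1 - δ) * (x n : ℂ)‖ +
          ‖((negBetaDigit β (preState β δ x n) : ℤ) : ℂ) * γ ^ δ‖ :=
          (norm_sub_le _ _).trans (by gcongr; exact norm_add_le _ _)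
      _ ≤ ‖γ‖ * ‖aeval γ (statePoly β δ x n)‖ + 2 * ⌊β⌋ := by
          rw [norm_mul, norm_neg]; linarith

open IntermediateField in
theorem finite_aeval_of_norm_aeval_conj_le {β : ℝ} (hβ : IsIntegral ℤ β) (B : ℂ → ℝ) :
    {r : ℝ | ∃ P : ℤ[X], r = aeval β P ∧
      ∀ γ : ℂ, aeval γ (minpoly ℤ β) = 0 → ‖aeval γ P‖ ≤ B γ}.Finite := by
  have : FiniteDimensional ℚ ℚ⟮β⟯ := adjoin.finiteDimensional hβ.tower_top
  have : NumberField ℚ⟮β⟯ := ⟨⟩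
  set b := AdjoinSimple.gen ℚ β
  have hb : algebraMap ℚ⟮β⟯ ℝ b = β := AdjoinSimple.algebraMap_gen ℚ β
  have hmin := minpoly.algebraMap_eq (A := ℤ) (algebraMap ℚ⟮β⟯ ℝ).injective b
  rw [hb] at hmin
  have hroot (φ : ℚ⟮β⟯ →+* ℂ) : aeval (φ b) (minpoly ℤ β) = 0 := by
    rw [hmin]
    exact (aeval_algHom_apply φ.toIntAlgHom b _).trans (by rw [minpoly.aeval, map_zero])
  obtain ⟨M, hM⟩ := (Set.finite_range fun φ : ℚ⟮β⟯ →+* ℂ ↦ B (φ b)).bddAbove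
  refine ((NumberField.Embeddings.finite_of_norm_le ℚ⟮β⟯ ℂ M).image
    (algebraMap ℚ⟮β⟯ ℝ)).subset ?_
  rintro _ ⟨P, rfl, hP⟩
  refine ⟨aeval b P, ⟨?_, fun φ ↦ ?_⟩, by rw [← aeval_algebraMap_apply, hb]⟩
  · have hbint : IsIntegral ℤ b := by
      rwa [← isIntegral_algebraMap_iff (algebraMap ℚ⟮β⟯ ℝ).injective, hb]
    exact adjoin_le_integralClosure hbint (aeval_mem_adjoin_singleton ℤ b)
  · rw [← RingHom.toIntAlgHom_apply, ← aeval_algHom_apply]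
    exact (hP _ (hroot φ)).trans (hM ⟨φ, rfl⟩)

theorem abs_qseq_le {β : ℝ} {δ : ℕ} {x : ℕ → ℤ} (hβ : 1 < β) (hδpos : 0 < δ)
    (hδ : DelayCond β δ) (hx : ∀ j, 0 ≤ x j ∧ x j ≤ ⌊β⌋)
    (hval : ∑' j : ℕ, (x j : ℝ) * β⁻¹ ^ (j + 1) < 1 / (β + 1)) (n : ℕ) :
    |qseq β δ x n| ≤ 1 + ⌊β⌋ / β ^ δ := by
  obtain ⟨hlo, hhi⟩ := qseq_mem_Icc hβ hδpos hδ hx hval n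
  have hP : β / (β + 1) ≤ 1 := (div_le_one (by linarith)).2 (by linarith)
  have hQ : 1 / (β + 1) ≤ 1 := (div_le_one (by linarith)).2 (by linarith)
  have hτ : 0 ≤ (⌊β⌋ : ℝ) / β ^ δ := by
    have := Int.floor_nonneg.2 (zero_le_one.trans hβ.le)
    positivity
  exact abs_le.2 ⟨by linarith, by linarith⟩

theorem online_conversion_finitely_many_states_general (β : ℝ) (hβ : IsPisot β)
    (δ : ℕ) (hδpos : 0 < δ) (hδ : DelayCond β δ) :
    {r : ℝ | ∃ x : ℕ → ℤ, (∀ j, 0 ≤ x j ∧ x j ≤ ⌈β⌉ - 1) ∧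
      0 ≤ (∑' j : ℕ, (x j : ℝ) * (β⁻¹) ^ (j + 1)) ∧
      (∑' j : ℕ, (x j : ℝ) * (β⁻¹) ^ (j + 1)) < 1 / (β + 1) ∧
      ∃ n : ℕ, r = qseq β δ x n}.Finite := by
  obtain ⟨hβ1, hint, hconj⟩ := hβ
  have hβ0 : 0 < β := by linarith
  refine ((finite_aeval_of_norm_aeval_conj_le hint fun γ ↦
    if ‖γ‖ < 1 then δ * ⌊β⌋ + 2 * ⌊β⌋ / (1 - ‖γ‖) else β ^ δ * (1 + ⌊β⌋ / β ^ δ)).image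
    (· / β ^ δ)).subset ?_
  rintro _ ⟨x, hx, -, hval, n, rfl⟩
  have hx' (j : ℕ) : 0 ≤ x j ∧ x j ≤ ⌊β⌋ :=
    ⟨(hx j).1, by linarith [(hx j).2, Int.ceil_le_floor_add_one β]⟩
  refine ⟨_, ⟨statePoly β δ x n, rfl, fun γ hγ ↦ ?_⟩, ?_⟩
  · split_ifs with hγ1
    · exact norm_aeval_statePoly_le hβ0.le (fun j ↦ (abs_of_nonneg (hx' j).1).trans_le (hx' j).2)
        hγ1 n
    · obtain rfl : γ = β := by_contra fun hne ↦ hγ1 (hconj γ hγ hne)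
      rw [← Complex.coe_algebraMap, aeval_algebraMap_apply, Complex.coe_algebraMap,
        Complex.norm_real, Real.norm_eq_abs, aeval_statePoly hβ0.ne', abs_mul,
        abs_of_pos (pow_pos hβ0 δ)]
      exact mul_le_mul_of_nonneg_left (abs_qseq_le hβ1 hδpos hδ hx' hval n) (by positivity)
  · simp only [aeval_statePoly hβ0.ne', mul_div_cancel_left₀ _ (pow_ne_zero δ hβ0.ne')]

/-- If `β` is a Pisot number, the set of all states `q_n` of the on-line conversion
algorithm, over all `n ≥ 0` and all admissible inputs (sequences over
`A_β = {0,…,⌈β⌉-1}` with value in `[0, 1/(β+1))`), is finite. -/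
theorem online_conversion_finitely_many_states (β : ℝ) (hβ : IsPisot β)
    (δ : ℕ) (hδpos : 0 < δ) (hδ : DelayCond β δ)
    (hδmin : ∀ δ' : ℕ, 0 < δ' → DelayCond β δ' → δ ≤ δ') :
    {r : ℝ | ∃ x : ℕ → ℤ, (∀ j, 0 ≤ x j ∧ x j ≤ ⌈β⌉ - 1) ∧
      0 ≤ (∑' j : ℕ, (x j : ℝ) * (β⁻¹) ^ (j + 1)) ∧
      (∑' j : ℕ, (x j : ℝ) * (β⁻¹) ^ (j + 1)) < 1 / (β + 1) ∧
      ∃ n : ℕ, r = qseq β δ x n}.Finite :=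
  online_conversion_finitely_many_states_general β hβ δ hδpos hδ
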